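/- In the Linear DistFlow model for a radial network with nonnegative line resistances and reactances, the linear voltage estimate upper-bounds the true squared voltage magnitude: for every node i, v_i ≤ v̂_i(s), where v̂_i(s) = v_0 + 2·Σ_{(j,k)∈P_i} Re(z̄_{jk} Ŝ_{jk}(s)) and the true voltages satisfy the DistFlow equations with nonnegative squared currents l_{jk} ≥ 0. -/

import Mathlib

open Finset

/-!
Let `Tₑ = Sₑ - zₑ lₑ` be the flow arriving at node `e`. The DistFlow flow equation says that `T`
satisfies the same children recursion as the subtree sums, so `Tₑ = Σ_{h below e} (s_h - z_h l_h)`, and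
hence `Ŝₑ - Sₑ = Σ_{h strictly below e} z_h l_h`. This loss term lies in the closed first
quadrant, as does `zₑ`, so `Re(z̄ₑ Sₑ) ≤ Re(z̄ₑ Ŝₑ)`. Summing the voltage drops along the path
to the root, and discarding the nonnegative terms `|zₑ|² lₑ`, gives `vᵢ ≤ v̂ᵢ`.
-/

/-- `P i` is the set of branches on the path from `i` to `root`, a branch being named by its
child end. -/
structure IsRootPaths {V : Type*} [DecidableEq V] (root : V) (parent : V → V)
    (P : V → Finset V) : Prop where
  eq_empty : P root = ∅
  eq_insert : ∀ i, i ≠ root → P i = insert i (P (parent i))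
  not_mem_parent : ∀ i, i ≠ root → i ∉ P (parent i)

section Tree

variable {V : Type*} [DecidableEq V] {root : V} {parent : V → V} {P : V → Finset V}

namespace IsRootPaths

theorem card_eq (hT : IsRootPaths root parent P) {i : V} (hi : i ≠ root) :
    (P i).card = (P (parent i)).card + 1 := by
  rw [hT.eq_insert i hi, card_insert_of_notMem (hT.not_mem_parent i hi)]

theorem mem_self (hT : IsRootPaths root parent P) {i : V} (hi : i ≠ root) : i ∈ P i := by
  rw [hT.eq_insert i hi]
  exact mem_insert_self _ _

theorem ne_root_of_mem (hT : IsRootPaths root parent P) {i e : V} (he : e ∈ P i) :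
    i ≠ root := by
  rintro rfl
  simp [hT.eq_empty] at he

theorem mem_ne_root (hT : IsRootPaths root parent P) {i e : V} (he : e ∈ P i) :
    e ≠ root := by
  have hi := hT.ne_root_of_mem he
  rw [hT.eq_insert i hi, mem_insert] at he
  rcases he with rfl | he
  · exact hi
  · have := hT.card_eq hi
    exact hT.mem_ne_root he
termination_by (P i).card

theorem subset_of_mem (hT : IsRootPaths root parent P) {h c : V} (hc : c ∈ P h) :
    P c ⊆ P h := by
  have hh := hT.ne_root_of_mem hc
  rw [hT.eq_insert h hh, mem_insert] at hc
  rw [hT.eq_insert h hh]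
  rcases hc with rfl | hc
  · rw [← hT.eq_insert c hh]
  · have := hT.card_eq hh
    exact (hT.subset_of_mem hc).trans (subset_insert _ _)
termination_by (P h).card

theorem exists_parent_eq (hT : IsRootPaths root parent P) {h i : V} (hi : i ∈ P h)
    (hne : i ≠ h) : ∃ c ∈ P h, parent c = i := by
  have hh := hT.ne_root_of_mem hi
  rw [hT.eq_insert h hh, mem_insert] at hi
  rw [hT.eq_insert h hh]
  rcases hi with rfl | hi
  · exact absurd rfl hne
  by_cases hp : parent h = i
  · exact ⟨h, mem_insert_self _ _, hp⟩
  · have := hT.card_eq hh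
    obtain ⟨c, hc, rfl⟩ := hT.exists_parent_eq hi fun e => hp e.symm
    exact ⟨c, mem_insert_of_mem hc, rfl⟩
termination_by (P h).card

theorem eq_of_parent_eq (hT : IsRootPaths root parent P) {h c c' : V} (hc : c ∈ P h)
    (hc' : c' ∈ P h) (hpar : parent c = parent c') : c = c' := by
  have hh := hT.ne_root_of_mem hc
  rw [hT.eq_insert h hh, mem_insert] at hc hc'
  rcases hc, hc' with ⟨rfl | hc, rfl | hc'⟩
  · rfl
  · exact absurd (hpar ▸ hc') (hT.not_mem_parent c' (hT.mem_ne_root hc'))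
  · exact absurd (hpar ▸ hc) (hT.not_mem_parent c (hT.mem_ne_root hc))
  · have := hT.card_eq hh
    exact hT.eq_of_parent_eq hc hc' hpar
termination_by (P h).card

theorem eq_root_add_sum {M : Type*} [AddCommMonoid M] (hT : IsRootPaths root parent P)
    {g d : V → M} (hg : ∀ i, i ≠ root → g i = g (parent i) + d i) (i : V) :
    g i = g root + ∑ e ∈ P i, d e := by
  by_cases hi : i = root
  · simp [hi, hT.eq_empty]
  · have := hT.card_eq hi
    rw [hg i hi, hT.eq_insert i hi, sum_insert (hT.not_mem_parent i hi),
      hT.eq_root_add_sum hg (parent i)]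
    abel
termination_by (P i).card

end IsRootPaths

section Descendants

variable [Fintype V]

def children (parent : V → V) (root i : V) : Finset V :=
  univ.filter fun h => parent h = i ∧ h ≠ root

def descendants (P : V → Finset V) (i : V) : Finset V :=
  univ.filter fun h => i ∈ P h

theorem mem_children {i c : V} :
    c ∈ children parent root i ↔ parent c = i ∧ c ≠ root := by
  simp [children]

theorem mem_descendants {i h : V} : h ∈ descendants P i ↔ i ∈ P h := by
  simp [descendants]

namespace IsRootPaths

theorem descendants_erase (hT : IsRootPaths root parent P) {i : V} (hi : i ≠ root) :
    (descendants P i).erase i = (children parent root i).biUnion (descendants P) := by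
  ext h
  simp only [mem_erase, mem_biUnion, mem_descendants, mem_children]
  constructor
  · rintro ⟨hne, hih⟩
    obtain ⟨c, hc, rfl⟩ := hT.exists_parent_eq hih fun e => hne e.symm
    exact ⟨c, ⟨rfl, hT.mem_ne_root hc⟩, hc⟩
  · rintro ⟨c, ⟨rfl, hc⟩, hch⟩
    have hsub := hT.subset_of_mem hch
    have hpar : parent c ∈ P c := by
      rw [hT.eq_insert c hc]
      exact mem_insert_of_mem (hT.mem_self hi)
    refine ⟨?_, hsub hpar⟩
    rintro rfl
    have := card_le_card hsub
    have := hT.card_eq hc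
    omega

theorem pairwiseDisjoint_descendants (hT : IsRootPaths root parent P) (i : V) :
    (children parent root i : Set V).PairwiseDisjoint (descendants P) := by
  intro c hc c' hc' hne
  simp only [mem_coe, mem_children] at hc hc'
  refine disjoint_left.mpr fun h hch hc'h => hne ?_
  rw [mem_descendants] at hch hc'h
  exact hT.eq_of_parent_eq hch hc'h (hc.1.trans hc'.1.symm)

theorem sum_descendants {M : Type*} [AddCommMonoid M]
    (hT : IsRootPaths root parent P) {i : V} (hi : i ≠ root) (f : V → M) :
    ∑ h ∈ descendants P i, f h =
      f i + ∑ c ∈ children parent root i, ∑ h ∈ descendants P c, f h := by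
  rw [← add_sum_erase _ _ (mem_descendants.2 (hT.mem_self hi)), hT.descendants_erase hi,
    sum_biUnion (hT.pairwiseDisjoint_descendants i)]

theorem eq_sum_descendants {M : Type*} [AddCommMonoid M]
    (hT : IsRootPaths root parent P) {f g : V → M}
    (hg : ∀ i, i ≠ root → g i = f i + ∑ c ∈ children parent root i, g c) {i : V}
    (hi : i ≠ root) : g i = ∑ h ∈ descendants P i, f h := by
  rw [hg i hi, hT.sum_descendants hi]
  congr 1
  refine sum_congr rfl fun c hc => ?_
  obtain ⟨rfl, hc_ne⟩ := mem_children.1 hc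
  have := hT.card_eq hc_ne
  have := card_le_univ (P c)
  exact hT.eq_sum_descendants hg hc_ne
termination_by Fintype.card V - (P i).card

end IsRootPaths

end Descendants

end Tree

theorem re_conj_mul_nonneg {z w : ℂ} (hzr : 0 ≤ z.re) (hzi : 0 ≤ z.im) (hwr : 0 ≤ w.re)
    (hwi : 0 ≤ w.im) : 0 ≤ (starRingEnd ℂ z * w).re := by
  rw [Complex.mul_re, Complex.conj_re, Complex.conj_im, neg_mul, sub_neg_eq_add]
  positivity

theorem re_conj_mul_sum_nonneg {ι : Type*} (t : Finset ι) {z : ℂ} {w : ι → ℂ} {l : ι → ℝ}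
    (hzr : 0 ≤ z.re) (hzi : 0 ≤ z.im) (hwr : ∀ i, 0 ≤ (w i).re) (hwi : ∀ i, 0 ≤ (w i).im)
    (hl : ∀ i, 0 ≤ l i) : 0 ≤ (starRingEnd ℂ z * ∑ i ∈ t, w i * l i).re := by
  refine re_conj_mul_nonneg hzr hzi ?_ ?_
  · rw [Complex.re_sum]
    exact sum_nonneg fun i _ => by rw [Complex.re_mul_ofReal]; exact mul_nonneg (hwr i) (hl i)
  · rw [Complex.im_sum]
    exact sum_nonneg fun i _ => by rw [Complex.im_mul_ofReal]; exact mul_nonneg (hwi i) (hl i)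

theorem stmt_1_general (n : ℕ) (parent : Fin (n + 1) → Fin (n + 1))
    (P : Fin (n + 1) → Finset (Fin (n + 1)))
    (s S Shat z : Fin (n + 1) → ℂ) (v vhat l : Fin (n + 1) → ℝ) (v0 : ℝ)
    -- path structure of the radial network
    (hP0 : P 0 = ∅)
    (hPstep : ∀ i : Fin (n + 1), i ≠ 0 → P i = insert i (P (parent i)))
    (hPnew : ∀ i : Fin (n + 1), i ≠ 0 → i ∉ P (parent i))
    -- DistFlow equations for the true quantities
    (hflow : ∀ i : Fin (n + 1), i ≠ 0 →
      S i = s i + ∑ h ∈ Finset.univ.filter (fun h => parent h = i ∧ h ≠ 0),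
        (S h - z h * (l h : ℂ)))
    (hvolt : ∀ i : Fin (n + 1), i ≠ 0 →
      v i - v (parent i) =
        2 * ((starRingEnd ℂ) (z i) * S i).re - ‖z i‖ ^ 2 * l i)
    (hv0 : v 0 = v0)
    -- nonnegative squared currents, resistances and reactances
    (hl : ∀ i, 0 ≤ l i) (hr : ∀ i, 0 ≤ (z i).re) (hx : ∀ i, 0 ≤ (z i).im)
    -- Linear DistFlow estimates
    (hShat : ∀ e : Fin (n + 1), e ≠ 0 →
      Shat e = ∑ h ∈ Finset.univ.filter (fun h => e ∈ P h), s h)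
    (hvhat : ∀ i, vhat i = v0 + 2 * ∑ e ∈ P i, ((starRingEnd ℂ) (z e) * Shat e).re) :
    ∀ i, v i ≤ vhat i := by
  have hT : IsRootPaths (0 : Fin (n + 1)) parent P := ⟨hP0, hPstep, hPnew⟩
  have hreceived : ∀ e, e ≠ 0 →
      S e - z e * l e = ∑ h ∈ descendants P e, (s h - z h * l h) :=
    fun e he => hT.eq_sum_descendants (g := fun e => S e - z e * l e)
      (fun i hi => by rw [hflow i hi, children]; ring) he
  have hloss : ∀ e, e ≠ 0 → Shat e = S e + ∑ h ∈ (descendants P e).erase e, z h * l h := by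
    intro e he
    have hShat_e : Shat e = ∑ h ∈ descendants P e, s h := hShat e he
    have hsplit := add_sum_erase _ (fun h => z h * (l h : ℂ)) (mem_descendants.2 (hT.mem_self he))
    have hreceived_e := hreceived e he
    rw [sum_sub_distrib] at hreceived_e
    linear_combination hShat_e - hreceived_e - hsplit
  have hdrop : ∀ e, e ≠ 0 →
      2 * ((starRingEnd ℂ) (z e) * S e).re - ‖z e‖ ^ 2 * l e ≤
        2 * ((starRingEnd ℂ) (z e) * Shat e).re := by
    intro e he
    have := re_conj_mul_sum_nonneg ((descendants P e).erase e) (hr e) (hx e) hr hx hl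
    have : 0 ≤ ‖z e‖ ^ 2 * l e := mul_nonneg (sq_nonneg _) (hl e)
    rw [hloss e he, mul_add, Complex.add_re]
    linarith
  intro i
  have hv := hT.eq_root_add_sum (g := v)
    (d := fun e => 2 * ((starRingEnd ℂ) (z e) * S e).re - ‖z e‖ ^ 2 * l e)
    (fun i hi => by linarith [hvolt i hi]) i
  rw [hv, hv0, hvhat i, mul_sum]
  gcongr with e he
  exact hdrop e (hT.mem_ne_root he)

/-- Linear DistFlow over-estimates the squared voltage magnitudes.
A radial network rooted at node `0` is encoded by a parent map; each branch is
labelled by its child node `i ≠ 0`. `P i` is the (unique) path from node `i` to the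
root, given as the set of branches on it. If the true quantities `(S, v, l)` satisfy
the DistFlow equations with `l ≥ 0` and nonnegative resistances/reactances
`Re(z) ≥ 0`, `Im(z) ≥ 0`, and the Linear DistFlow estimates are
`Ŝ_e(s) = Σ_{h : e ∈ P_h} s_h`, `v̂_i(s) = v₀ + 2 Σ_{e ∈ P_i} Re(z̄_e Ŝ_e(s))`,
then `v_i ≤ v̂_i(s)` at every node `i`. -/
theorem stmt_1 (n : ℕ) (parent : Fin (n + 1) → Fin (n + 1))
    (P : Fin (n + 1) → Finset (Fin (n + 1)))
    (s S Shat z : Fin (n + 1) → ℂ) (v vhat l : Fin (n + 1) → ℝ) (v0 : ℝ)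
    -- path structure of the radial network
    (hP0 : P 0 = ∅)
    (hPstep : ∀ i : Fin (n + 1), i ≠ 0 → P i = insert i (P (parent i)))
    (hPnew : ∀ i : Fin (n + 1), i ≠ 0 → i ∉ P (parent i))
    (hPbranch : ∀ i e : Fin (n + 1), e ∈ P i → e ≠ 0)
    -- DistFlow equations for the true quantities
    (hflow : ∀ i : Fin (n + 1), i ≠ 0 →
      S i = s i + ∑ h ∈ Finset.univ.filter (fun h => parent h = i ∧ h ≠ 0),
        (S h - z h * (l h : ℂ)))
    (hvolt : ∀ i : Fin (n + 1), i ≠ 0 →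
      v i - v (parent i) =
        2 * ((starRingEnd ℂ) (z i) * S i).re - ‖z i‖ ^ 2 * l i)
    (hv0 : v 0 = v0)
    -- nonnegative squared currents, resistances and reactances
    (hl : ∀ i, 0 ≤ l i) (hr : ∀ i, 0 ≤ (z i).re) (hx : ∀ i, 0 ≤ (z i).im)
    -- Linear DistFlow estimates
    (hShat : ∀ e : Fin (n + 1), e ≠ 0 →
      Shat e = ∑ h ∈ Finset.univ.filter (fun h => e ∈ P h), s h)
    (hvhat : ∀ i, vhat i = v0 + 2 * ∑ e ∈ P i, ((starRingEnd ℂ) (z e) * Shat e).re) :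
    ∀ i, v i ≤ vhat i :=
  stmt_1_general n parent P s S Shat z v vhat l v0 hP0 hPstep hPnew hflow hvolt hv0 hl hr hx hShat
    hvhat
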